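/- arXiv:1509.07674 — 3 statements merged into one kernel-verified Lean document; each statement's English description precedes it below -/
import Mathlib

section
/- For n \geq 6, the 3-cycles of the tournament I_n are exactly the triples \{1,i,n\} for 3 \le i \le n-2 together with the triples \{i,i+1,i+2\} for 1 \le i \le n-2. -/
/-- The pairs of the linear order on `Fin n` whose edges are reversed to form `I_n`. -/
def RevPair (n : ℕ) (i j : Fin n) : Prop :=
  (j.val = i.val + 1) ∨ (i.val = 0 ∧ j.val = n - 1)

/-- The tournament `I_n` on `Fin n` (vertices `0, …, n-1` standing for `1, …, n`). -/
def Irel (n : ℕ) (i j : Fin n) : Prop :=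
  (i.val < j.val ∧ ¬ RevPair n i j) ∨ (j.val < i.val ∧ RevPair n j i)

/-- The set `{a,b,c}` (listed with `a < b < c`) induces a directed 3-cycle. -/
def IsCycleTriple (n : ℕ) (a b c : Fin n) : Prop :=
  (Irel n a b ∧ Irel n b c ∧ Irel n c a) ∨ (Irel n a c ∧ Irel n c b ∧ Irel n b a)

/-!
On a triple `a < b < c` the linear order is transitive, so the triple becomes a 3-cycle exactly
when the set of its reversed pairs is `{(a, c)}` or `{(a, b), (b, c)}`. The long pair `(a, c)` is
reversed only for `a = 0`, `c = n - 1`; both short pairs are reversed only for consecutive triples,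
and then the long pair `(a, a + 2)` is not reversed as soon as `n ≠ 3`.
-/

namespace Irel

variable {n : ℕ} {i j : Fin n}

theorem iff_not_revPair_of_lt (h : i.val < j.val) : Irel n i j ↔ ¬ RevPair n i j := by
  unfold Irel
  constructor
  · rintro (⟨-, hr⟩ | ⟨hji, -⟩)
    · exact hr
    · omega
  · exact fun hr => Or.inl ⟨h, hr⟩

theorem iff_revPair_of_gt (h : i.val < j.val) : Irel n j i ↔ RevPair n i j := by
  unfold Irel
  constructor
  · rintro (⟨hji, -⟩ | ⟨-, hr⟩)
    · omega
    · exact hr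
  · exact fun hr => Or.inr ⟨h, hr⟩

end Irel

section Triple

variable {n : ℕ} {a b c : Fin n}

theorem isCycleTriple_iff_revPair (hab : a.val < b.val) (hbc : b.val < c.val) :
    IsCycleTriple n a b c ↔
      (¬ RevPair n a b ∧ ¬ RevPair n b c ∧ RevPair n a c) ∨
        ((RevPair n a b ∧ RevPair n b c) ∧ ¬ RevPair n a c) := by
  have hac : a.val < c.val := hab.trans hbc
  simp only [IsCycleTriple, Irel.iff_not_revPair_of_lt hab, Irel.iff_not_revPair_of_lt hbc,
    Irel.iff_not_revPair_of_lt hac, Irel.iff_revPair_of_gt hab, Irel.iff_revPair_of_gt hbc,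
    Irel.iff_revPair_of_gt hac]
  tauto

theorem revPair_iff_of_lt_of_lt (hab : a.val < b.val) (hbc : b.val < c.val) :
    RevPair n a c ↔ a.val = 0 ∧ c.val = n - 1 := by
  unfold RevPair
  omega

theorem revPair_and_revPair_iff (hab : a.val < b.val) (hbc : b.val < c.val) :
    RevPair n a b ∧ RevPair n b c ↔ b.val = a.val + 1 ∧ c.val = a.val + 2 := by
  have hc := c.isLt
  unfold RevPair
  omega

end Triple

/-- For `n ≥ 6`, the 3-cycles of `I_n` are exactly the triples `{1, i, n}` for
`3 ≤ i ≤ n-2` together with the triples `{i, i+1, i+2}` for `1 ≤ i ≤ n-2`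
(here written 0-indexed: `{0, b, n-1}` with `2 ≤ b ≤ n-3`, and `{a, a+1, a+2}`). -/
theorem stmt10 (n : ℕ) (hn : 6 ≤ n) (a b c : Fin n)
    (hab : a.val < b.val) (hbc : b.val < c.val) :
    IsCycleTriple n a b c ↔
      ((a.val = 0 ∧ c.val = n - 1 ∧ 2 ≤ b.val ∧ b.val ≤ n - 3) ∨
       (b.val = a.val + 1 ∧ c.val = a.val + 2)) := by
  have hc := c.isLt
  rw [isCycleTriple_iff_revPair hab hbc, revPair_iff_of_lt_of_lt hab hbc,
    revPair_and_revPair_iff hab hbc]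
  unfold RevPair
  omega
end

section
/- For n \geq 6, the tournament I_n has exactly 2n - 6 three-cycles. -/
/-- A 3-element subset of vertices inducing a directed 3-cycle in `I_n`. -/
def IsCycleSet (n : ℕ) (s : Finset (Fin n)) : Prop :=
  ∃ a b c : Fin n, s = {a, b, c} ∧ Irel n a b ∧ Irel n b c ∧ Irel n c a


/-!
A 3-cycle `a → b → c → a` whose least vertex is `a` must enter `a` along a reversed edge, i.e.
from `a + 1` or (when `a = 0`) from `n - 1`; the remaining edges then force the cycle to be either
`{a, a + 1, a + 2}` or `{0, b, n - 1}` with `2 ≤ b ≤ n - 3`. There are `n - 2` cycles of the first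
kind and `n - 4` of the second, and the two families are disjoint.
-/

open Finset

namespace Irel

variable {n : ℕ}

lemma val_ne {a b : Fin n} (h : Irel n a b) : a.val ≠ b.val := by
  rcases h with ⟨h, -⟩ | ⟨h, -⟩ <;> omega

lemma cycle_of_lt_of_lt {a b c : Fin n} (hab : Irel n a b) (hbc : Irel n b c) (hca : Irel n c a)
    (hb : a.val < b.val) (hc : a.val < c.val) :
    (a.val = 0 ∧ 2 ≤ b.val ∧ b.val ≤ n - 3 ∧ c.val = n - 1) ∨
      (c.val = a.val + 1 ∧ b.val = a.val + 2) := by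
  simp only [Irel, RevPair] at hab hbc hca
  omega

lemma card_eq_three_and_isCycleSet {a b c : Fin n} (hab : Irel n a b) (hbc : Irel n b c)
    (hca : Irel n c a) : ({a, b, c} : Finset (Fin n)).card = 3 ∧ IsCycleSet n {a, b, c} :=
  ⟨card_eq_three.mpr ⟨a, b, c, fun h => hab.val_ne (congrArg Fin.val h),
      fun h => hca.val_ne (congrArg Fin.val h).symm, fun h => hbc.val_ne (congrArg Fin.val h), rfl⟩,
    ⟨a, b, c, rfl, hab, hbc, hca⟩⟩

end Irel

/-- The triple `{1, k + 1, n}` of the paper, in `0`-based labels. -/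
def fanTriple (n k : ℕ) : Finset (Fin n) :=
  univ.filter fun v => v.val = 0 ∨ v.val = k ∨ v.val = n - 1

def consecutiveTriple (n k : ℕ) : Finset (Fin n) :=
  univ.filter fun v => k ≤ v.val ∧ v.val ≤ k + 2

def cycleTriples (n : ℕ) : Finset (Finset (Fin n)) :=
  (Icc 2 (n - 3)).image (fanTriple n) ∪ (range (n - 2)).image (consecutiveTriple n)

section Triples

variable {n k : ℕ}

lemma mem_fanTriple {v : Fin n} : v ∈ fanTriple n k ↔ v.val = 0 ∨ v.val = k ∨ v.val = n - 1 := by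
  simp only [fanTriple, mem_filter, mem_univ, true_and]

lemma mem_consecutiveTriple {v : Fin n} :
    v ∈ consecutiveTriple n k ↔ k ≤ v.val ∧ v.val ≤ k + 2 := by
  simp only [consecutiveTriple, mem_filter, mem_univ, true_and]

lemma fanTriple_eq {a b c : Fin n} (ha : a.val = 0) (hb : b.val = k) (hc : c.val = n - 1) :
    fanTriple n k = {a, b, c} := by
  ext v
  simp only [mem_fanTriple, mem_insert, mem_singleton, Fin.ext_iff]
  omega

lemma consecutiveTriple_eq {a b c : Fin n} (ha : a.val = k) (hb : b.val = k + 2)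
    (hc : c.val = k + 1) : consecutiveTriple n k = {a, b, c} := by
  ext v
  simp only [mem_consecutiveTriple, mem_insert, mem_singleton, Fin.ext_iff]
  omega

lemma mem_cycleTriples_of_cycle_of_lt_of_lt {a b c : Fin n} (hab : Irel n a b)
    (hbc : Irel n b c) (hca : Irel n c a) (hb : a.val < b.val) (hc : a.val < c.val) :
    {a, b, c} ∈ cycleTriples n := by
  simp only [cycleTriples, mem_union, mem_image, mem_Icc, mem_range]
  rcases hab.cycle_of_lt_of_lt hbc hca hb hc with ⟨ha0, hb2, hbn, hcn⟩ | ⟨hca1, hba2⟩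
  · exact Or.inl ⟨b.val, ⟨hb2, hbn⟩, fanTriple_eq ha0 rfl hcn⟩
  · exact Or.inr ⟨a.val, by omega, consecutiveTriple_eq rfl hba2 hca1⟩

lemma mem_cycleTriples_of_cycle {a b c : Fin n} (hab : Irel n a b) (hbc : Irel n b c)
    (hca : Irel n c a) : {a, b, c} ∈ cycleTriples n := by
  have rotate (x y z : Fin n) : ({x, y, z} : Finset (Fin n)) = {y, z, x} := by
    ext v
    simp only [mem_insert, mem_singleton]
    tauto
  have := hab.val_ne
  have := hbc.val_ne
  have := hca.val_ne
  rcases (by omega : (a.val < b.val ∧ a.val < c.val) ∨ (b.val < c.val ∧ b.val < a.val) ∨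
      (c.val < a.val ∧ c.val < b.val)) with ⟨hb, hc⟩ | ⟨hc, ha⟩ | ⟨ha, hb⟩
  · exact mem_cycleTriples_of_cycle_of_lt_of_lt hab hbc hca hb hc
  · rw [rotate]
    exact mem_cycleTriples_of_cycle_of_lt_of_lt hbc hca hab hc ha
  · rw [rotate, rotate]
    exact mem_cycleTriples_of_cycle_of_lt_of_lt hca hab hbc ha hb

lemma card_eq_three_and_isCycleSet_of_mem_cycleTriples (hn : 4 ≤ n) {s : Finset (Fin n)}
    (hs : s ∈ cycleTriples n) : s.card = 3 ∧ IsCycleSet n s := by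
  simp only [cycleTriples, mem_union, mem_image, mem_Icc, mem_range] at hs
  rcases hs with ⟨k, ⟨hk2, hkn⟩, rfl⟩ | ⟨k, hk, rfl⟩
  · rw [fanTriple_eq (a := ⟨0, by omega⟩) (b := ⟨k, by omega⟩) (c := ⟨n - 1, by omega⟩) rfl rfl rfl]
    apply Irel.card_eq_three_and_isCycleSet <;> dsimp only [Irel, RevPair] <;> omega
  · rw [consecutiveTriple_eq (a := ⟨k, by omega⟩) (b := ⟨k + 2, by omega⟩)
      (c := ⟨k + 1, by omega⟩) rfl rfl rfl]
    apply Irel.card_eq_three_and_isCycleSet <;> dsimp only [Irel, RevPair] <;> omega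

open Classical in
lemma filter_isCycleSet_eq_cycleTriples (hn : 4 ≤ n) :
    (univ : Finset (Finset (Fin n))).filter (fun s => s.card = 3 ∧ IsCycleSet n s) =
      cycleTriples n := by
  ext s
  rw [mem_filter, and_iff_right (mem_univ s)]
  constructor
  · rintro ⟨-, a, b, c, rfl, hab, hbc, hca⟩
    exact mem_cycleTriples_of_cycle hab hbc hca
  · exact card_eq_three_and_isCycleSet_of_mem_cycleTriples hn

lemma fanTriple_injOn : Set.InjOn (fanTriple n) (Icc 2 (n - 3)) := by
  intro k hk j hj hkj
  rw [coe_Icc, Set.mem_Icc] at hk hj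
  have hk_mem : (⟨k, by omega⟩ : Fin n) ∈ fanTriple n j := hkj ▸ mem_fanTriple.2 (.inr (.inl rfl))
  rw [mem_fanTriple, Fin.val_mk] at hk_mem
  omega

lemma consecutiveTriple_injOn : Set.InjOn (consecutiveTriple n) (range (n - 2)) := by
  intro k hk j hj hkj
  rw [coe_range, Set.mem_Iio] at hk hj
  have hk_mem : (⟨k, by omega⟩ : Fin n) ∈ consecutiveTriple n j :=
    hkj ▸ mem_consecutiveTriple.2 ⟨le_rfl, Nat.le_add_right _ 2⟩
  have hj_mem : (⟨j, by omega⟩ : Fin n) ∈ consecutiveTriple n k :=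
    hkj ▸ mem_consecutiveTriple.2 ⟨le_rfl, Nat.le_add_right _ 2⟩
  rw [mem_consecutiveTriple, Fin.val_mk] at hk_mem hj_mem
  omega

lemma fanTriple_ne_consecutiveTriple (hn : 4 ≤ n) (k j : ℕ) :
    fanTriple n k ≠ consecutiveTriple n j := by
  intro h
  have h0 : (⟨0, by omega⟩ : Fin n) ∈ consecutiveTriple n j := h ▸ mem_fanTriple.2 (.inl rfl)
  have hlast : (⟨n - 1, by omega⟩ : Fin n) ∈ consecutiveTriple n j :=
    h ▸ mem_fanTriple.2 (.inr (.inr rfl))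
  rw [mem_consecutiveTriple, Fin.val_mk] at h0 hlast
  omega

lemma card_cycleTriples (hn : 4 ≤ n) : (cycleTriples n).card = 2 * n - 6 := by
  have hdisj : Disjoint ((Icc 2 (n - 3)).image (fanTriple n))
      ((range (n - 2)).image (consecutiveTriple n)) := by
    simp only [disjoint_left, mem_image, not_exists, not_and]
    rintro _ ⟨k, -, rfl⟩ j -
    exact (fanTriple_ne_consecutiveTriple hn k j).symm
  rw [cycleTriples, card_union_of_disjoint hdisj, card_image_of_injOn fanTriple_injOn,
    card_image_of_injOn consecutiveTriple_injOn, Nat.card_Icc, card_range]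
  omega

end Triples

open Classical in
/-- For `n ≥ 6`, the tournament `I_n` has exactly `2n - 6` three-cycles. -/
theorem stmt11 (n : ℕ) (hn : 6 ≤ n) :
    ((Finset.univ : Finset (Finset (Fin n))).filter
      (fun s => s.card = 3 ∧ IsCycleSet n s)).card = 2 * n - 6 := by
  rw [filter_isCycleSet_eq_cycleTriples (by omega), card_cycleTriples (by omega)]
end

section
/- For distinct m, n \geq 6, the tournament I_m does not embed into the tournament I_n; hence \{I_n : n \ge 6\} is an infinite antichain under embeddability. -/
/-!
Call two three-cycles of a tournament adjacent when they share two vertices. The three-cycles of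
`I_n` (vertices `0, …, n-1`) contain the path
`{0,2,n-1}, {0,1,2}, {1,2,3}, …, {n-3,n-2,n-1}, {0,n-3,n-1}` on `n` vertices, whose interior
vertices `{j,j+1,j+2}` have no neighbours off the path; every other three-cycle is `{0,s,n-1}`.
For `I_m` this path closes up into a cycle of length `m`, and an embedding `I_m → I_n` carries it
to a cycle of `m` distinct, successively adjacent three-cycles of `I_n`. The images of `{0,1,2}`
and `{3,4,5}` are disjoint, so one of them is not of the form `{0,s,n-1}`: the cycle passes
through an interior vertex of the path, hence has to run along the whole path, and `m ≥ n`.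
Injectivity gives `m ≤ n`.
-/

open Finset Function

section CycleThroughPath

variable {V : Type*} {G : SimpleGraph V} {m L : ℕ} {c : ZMod m → V} {v : ℕ → V}

lemma ZMod.two_ne_zero_of_three_le (hm : 3 ≤ m) : (2 : ZMod m) ≠ 0 := fun h => by
  have := Nat.le_of_dvd two_pos ((ZMod.natCast_eq_zero_iff 2 m).mp (by exact_mod_cast h))
  omega

def IsCyclicEmbedding (G : SimpleGraph V) (c : ZMod m → V) : Prop :=
  Injective c ∧ ∀ k, G.Adj (c k) (c (k + 1))

def InteriorNeighborsOnPath (G : SimpleGraph V) (v : ℕ → V) (L : ℕ) : Prop :=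
  ∀ i, 0 < i → i < L → G.neighborSet (v i) ⊆ {v (i - 1), v (i + 1)}

lemma IsCyclicEmbedding.comp_neg (hc : IsCyclicEmbedding G c) :
    IsCyclicEmbedding G (fun k => c (-k)) :=
  ⟨hc.1.comp neg_injective, fun k => by simpa using (hc.2 (-(k + 1))).symm⟩

lemma InteriorNeighborsOnPath.reverse (hv : InteriorNeighborsOnPath G v L) :
    InteriorNeighborsOnPath G (fun i => v (L - i)) L := fun i hi₀ hiL => by
  dsimp only
  rw [show L - (i - 1) = L - i + 1 by omega, show L - (i + 1) = L - i - 1 by omega,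
    Set.pair_comm]
  exact hv _ (by omega) (by omega)

lemma IsCyclicEmbedding.ne_of_add_two (hm : 3 ≤ m) (hc : IsCyclicEmbedding G c) (k : ZMod m) :
    c (k + 2) ≠ c k := fun h => ZMod.two_ne_zero_of_three_le hm (by linear_combination hc.1 h)

/-- At an interior vertex of the path the cycle cannot step back without repeating a vertex, and
there is no other way out. -/
lemma IsCyclicEmbedding.apply_add_eq (hm : 3 ≤ m) (hc : IsCyclicEmbedding G c)
    (hv : InteriorNeighborsOnPath G v L) {k : ZMod m} {i : ℕ} (h₀ : c k = v i)
    (h₁ : c (k + 1) = v (i + 1)) {d : ℕ} (hd : i + d ≤ L) : c (k + d) = v (i + d) := by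
  suffices key : ∀ d, i + d < L → c (k + d) = v (i + d) ∧ c (k + d + 1) = v (i + d + 1) by
    rcases d with _ | d
    · simpa using h₀
    · simpa [add_assoc] using (key d (by omega)).2
  intro d
  induction d with
  | zero => simpa using fun _ => ⟨h₀, h₁⟩
  | succ d ih =>
    intro hd
    obtain ⟨e₀, e₁⟩ := ih (by omega)
    have e₁' : c (k + ↑(d + 1)) = v (i + (d + 1)) := by push_cast; simpa [add_assoc] using e₁
    refine ⟨e₁', ?_⟩
    have hnb : c (k + ↑(d + 1) + 1) ∈ G.neighborSet (v (i + (d + 1))) := e₁' ▸ hc.2 _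
    rcases hv _ (by omega) (by omega) hnb with h | h
    · have h₂ : k + ↑(d + 1) + 1 = k + d + 2 := by push_cast; ring
      refine absurd ?_ (hc.ne_of_add_two hm (k + d))
      rw [← h₂, h, e₀, show i + (d + 1) - 1 = i + d by omega]
    · simpa [add_assoc] using h

lemma IsCyclicEmbedding.mem_range_of_le (hm : 3 ≤ m) (hc : IsCyclicEmbedding G c)
    (hv : InteriorNeighborsOnPath G v L) {k : ZMod m} {i : ℕ} (hi₀ : 0 < i) (hiL : i < L)
    (hk : c k = v i) {j : ℕ} (hij : i ≤ j) (hj : j ≤ L) : v j ∈ Set.range c := by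
  have hnb : ∀ k', G.Adj (c k) (c k') → c k' = v (i - 1) ∨ c k' = v (i + 1) :=
    fun k' h => hv i hi₀ hiL (hk ▸ h)
  obtain ⟨c', hc', hrange, k', h₀, h₁⟩ : ∃ c' : ZMod m → V, IsCyclicEmbedding G c' ∧
      Set.range c' ⊆ Set.range c ∧ ∃ k', c' k' = v i ∧ c' (k' + 1) = v (i + 1) := by
    obtain hup | hup := hnb _ (hc.2 k)
    · obtain hdn | hdn := hnb _ (by simpa using (hc.2 (k - 1)).symm)
      · refine absurd (hdn.trans hup.symm) fun h => hc.ne_of_add_two hm (k - 1) ?_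
        rw [show k - 1 + 2 = k + 1 by ring, h]
      · exact ⟨_, hc.comp_neg, Set.range_comp_subset_range _ _, -k, by simpa,
          by simpa [neg_add_eq_sub] using hdn⟩
    · exact ⟨c, hc, subset_rfl, k, hk, hup⟩
  obtain ⟨d, rfl⟩ := Nat.exists_eq_add_of_le hij
  exact hrange ⟨_, hc'.apply_add_eq hm hv h₀ h₁ hj⟩

lemma IsCyclicEmbedding.mem_range (hm : 3 ≤ m) (hc : IsCyclicEmbedding G c)
    (hv : InteriorNeighborsOnPath G v L) {k : ZMod m} {i : ℕ} (hi₀ : 0 < i) (hiL : i < L)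
    (hk : c k = v i) {j : ℕ} (hj : j ≤ L) : v j ∈ Set.range c := by
  rcases le_total i j with hij | hji
  · exact hc.mem_range_of_le hm hv hi₀ hiL hk hij hj
  · simpa [Nat.sub_sub_self hj] using hc.mem_range_of_le hm hv.reverse (i := L - i) (by omega)
      (by omega) (by simpa [Nat.sub_sub_self hiL.le]) (by omega) (Nat.sub_le L j)

lemma IsCyclicEmbedding.map {W : Type*} {G' : SimpleGraph W} (hc : IsCyclicEmbedding G c)
    (φ : G →g G') (hφ : Injective φ) : IsCyclicEmbedding G' (φ ∘ c) :=
  ⟨hφ.comp hc.1, fun k => φ.map_adj (hc.2 k)⟩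

theorem IsCyclicEmbedding.lt_of_apply_eq (hm : 3 ≤ m) (hc : IsCyclicEmbedding G c)
    (hv : InteriorNeighborsOnPath G v L) (hv_inj : Set.InjOn v (Set.Iic L)) {k : ZMod m}
    {i : ℕ} (hi₀ : 0 < i) (hiL : i < L) (hk : c k = v i) : L < m := by
  classical
  have : NeZero m := ⟨by omega⟩
  calc L < #(range (L + 1)) := by simp
    _ ≤ #(univ.image c) := by
      refine card_le_card_of_injOn v (fun j hj => ?_) (fun a ha b hb => ?_)
      · obtain ⟨k', hk'⟩ := hc.mem_range hm hv hi₀ hiL hk (mem_range_succ_iff.mp hj)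
        exact mem_image.mpr ⟨k', mem_univ _, hk'⟩
      · exact hv_inj (by simpa [Nat.lt_succ_iff] using ha) (by simpa [Nat.lt_succ_iff] using hb)
    _ ≤ m := card_image_le.trans (by rw [card_univ, ZMod.card])

end CycleThroughPath

section ThreeCycleGraph

variable {α β : Type*} [DecidableEq α] [DecidableEq β]

def IsThreeCycle (r : α → α → Prop) (s : Finset α) : Prop :=
  ∃ a b c, r a b ∧ r b c ∧ r c a ∧ s = {a, b, c}

def threeCycleGraph (r : α → α → Prop) : SimpleGraph (Finset α) where
  Adj s t := s ≠ t ∧ IsThreeCycle r s ∧ IsThreeCycle r t ∧ 1 < #(s ∩ t)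
  symm := ⟨fun _ _ ⟨hst, hs, ht, h⟩ => ⟨hst.symm, ht, hs, by rwa [inter_comm]⟩⟩
  loopless := ⟨fun _ h => h.1 rfl⟩

lemma IsThreeCycle.map {r : α → α → Prop} {r' : β → β → Prop} (f : α ↪ β)
    (hf : ∀ x y, r x y → r' (f x) (f y)) {s : Finset α} (hs : IsThreeCycle r s) :
    IsThreeCycle r' (s.map f) := by
  obtain ⟨a, b, c, hab, hbc, hca, rfl⟩ := hs
  exact ⟨f a, f b, f c, hf _ _ hab, hf _ _ hbc, hf _ _ hca, by simp⟩

def threeCycleGraph.map {r : α → α → Prop} {r' : β → β → Prop} (f : α ↪ β)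
    (hf : ∀ x y, r x y → r' (f x) (f y)) : threeCycleGraph r →g threeCycleGraph r' where
  toFun s := s.map f
  map_rel' := fun {_ _} ⟨hst, hs, ht, h⟩ =>
    ⟨(map_injective f).ne hst, hs.map f hf, ht.map f hf, by rwa [← map_inter, card_map]⟩

end ThreeCycleGraph

section Tournament

variable {n : ℕ}

def intervalTriangle (n j : ℕ) : Finset (Fin n) :=
  univ.filter fun x => j ≤ x.val ∧ x.val ≤ j + 2

def endpointTriangle (n s : ℕ) : Finset (Fin n) :=
  univ.filter fun x => x.val = 0 ∨ x.val = s ∨ x.val = n - 1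

@[simp] lemma mem_intervalTriangle {j : ℕ} {x : Fin n} :
    x ∈ intervalTriangle n j ↔ j ≤ x.val ∧ x.val ≤ j + 2 := by
  simp [intervalTriangle]

@[simp] lemma mem_endpointTriangle {s : ℕ} {x : Fin n} :
    x ∈ endpointTriangle n s ↔ x.val = 0 ∨ x.val = s ∨ x.val = n - 1 := by
  simp [endpointTriangle]

lemma isThreeCycle_Irel_iff (hn : 4 ≤ n) {s : Finset (Fin n)} :
    IsThreeCycle (Irel n) s ↔ (∃ j, j + 3 ≤ n ∧ s = intervalTriangle n j) ∨
      ∃ t, 2 ≤ t ∧ t + 3 ≤ n ∧ s = endpointTriangle n t := by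
  constructor
  · rintro ⟨a, b, c, hab, hbc, hca, rfl⟩
    simp only [Irel, RevPair] at hab hbc hca
    by_cases hT : max a.val (max b.val c.val) = min a.val (min b.val c.val) + 2
    · refine .inl ⟨min a.val (min b.val c.val), by omega, ?_⟩
      ext x
      simp only [mem_insert, mem_singleton, mem_intervalTriangle, Fin.ext_iff]
      omega
    -- the vertices are `0`, `n - 1` and a third one, recovered from the sum
    · refine .inr ⟨a.val + b.val + c.val - (n - 1), by omega, by omega, ?_⟩
      ext x
      simp only [mem_insert, mem_singleton, mem_endpointTriangle, Fin.ext_iff]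
      omega
  · rintro (⟨j, hj, rfl⟩ | ⟨t, ht₂, ht, rfl⟩)
    · refine ⟨⟨j + 1, by omega⟩, ⟨j, by omega⟩, ⟨j + 2, by omega⟩, ?_, ?_, ?_,
        ext fun x => ?_⟩ <;> simp [Irel, RevPair, Fin.ext_iff] <;> omega
    · refine ⟨⟨0, by omega⟩, ⟨t, by omega⟩, ⟨n - 1, by omega⟩, ?_, ?_, ?_,
        ext fun x => ?_⟩ <;> simp [Irel, RevPair, Fin.ext_iff] <;> omega

def trianglePath (n i : ℕ) : Finset (Fin n) :=
  if i = 0 then endpointTriangle n 2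
  else if i ≤ n - 2 then intervalTriangle n (i - 1) else endpointTriangle n (n - 3)

lemma mem_trianglePath {i : ℕ} {x : Fin n} :
    x ∈ trianglePath n i ↔ (i = 0 ∧ (x.val = 0 ∨ x.val = 2 ∨ x.val = n - 1)) ∨
      (0 < i ∧ i ≤ n - 2 ∧ i - 1 ≤ x.val ∧ x.val ≤ i + 1) ∨
      (n - 2 < i ∧ (x.val = 0 ∨ x.val = n - 3 ∨ x.val = n - 1)) := by
  unfold trianglePath
  split_ifs <;> simp <;> omega

lemma trianglePath_zero : trianglePath n 0 = endpointTriangle n 2 := rfl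

lemma trianglePath_succ {j : ℕ} (hj : j + 3 ≤ n) :
    trianglePath n (j + 1) = intervalTriangle n j := by
  simp [trianglePath, show j + 1 ≤ n - 2 by omega]

lemma trianglePath_sub_one (hn : 3 ≤ n) :
    trianglePath n (n - 1) = endpointTriangle n (n - 3) := by
  rw [trianglePath, if_neg (by omega), if_neg (by omega)]

lemma trianglePath_injOn (hn : 6 ≤ n) : Set.InjOn (trianglePath n) (Set.Iic (n - 1)) := by
  intro a (ha : a ≤ n - 1) b (hb : b ≤ n - 1) h
  have key x (hx : x < n) := Finset.ext_iff.mp h ⟨x, hx⟩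
  unfold trianglePath at key
  -- membership of `0`, `2`, `n - 1`, `a - 1` and `b - 1` already tells the path vertices apart
  split_ifs at key <;>
  · have := key 0 (by omega)
    have := key 2 (by omega)
    have := key (n - 1) (by omega)
    have := key (a - 1) (by omega)
    have := key (b - 1) (by omega)
    simp only [mem_intervalTriangle, mem_endpointTriangle, true_or, or_true, true_iff,
      iff_true] at *
    omega

lemma isThreeCycle_trianglePath (hn : 6 ≤ n) {i : ℕ} (hi : i < n) :
    IsThreeCycle (Irel n) (trianglePath n i) := by
  refine (isThreeCycle_Irel_iff (by omega)).mpr ?_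
  unfold trianglePath
  split_ifs
  · exact .inr ⟨2, le_rfl, by omega, rfl⟩
  · exact .inl ⟨i - 1, by omega, rfl⟩
  · exact .inr ⟨n - 3, by omega, by omega, rfl⟩

lemma threeCycleGraph_adj_trianglePath_mod (hn : 6 ≤ n) {i : ℕ} (hi : i < n) :
    (threeCycleGraph (Irel n)).Adj (trianglePath n i) (trianglePath n ((i + 1) % n)) := by
  have hi' : (i + 1) % n < n := Nat.mod_lt _ (by omega)
  refine ⟨fun h => ?_, isThreeCycle_trianglePath hn hi, isThreeCycle_trianglePath hn hi', ?_⟩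
  · have := trianglePath_injOn hn (Set.mem_Iic.mpr (by omega)) (Set.mem_Iic.mpr (by omega)) h
    rcases (Nat.lt_or_ge (i + 1) n) with h' | h'
    · rw [Nat.mod_eq_of_lt h'] at this; omega
    · rw [show i + 1 = n by omega, Nat.mod_self] at this; omega
  rcases (show i + 1 < n ∨ i + 1 = n by omega) with h | h
  · rw [Nat.mod_eq_of_lt h]
    rcases (show i = 0 ∨ 0 < i ∧ i + 2 < n ∨ i + 2 = n by omega) with rfl | h | h
    · refine one_lt_card.mpr ⟨⟨0, by omega⟩, ?_, ⟨2, by omega⟩, ?_, by simp⟩ <;>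
        simp [mem_trianglePath] <;> omega
    · refine one_lt_card.mpr ⟨⟨i, by omega⟩, ?_, ⟨i + 1, by omega⟩, ?_, by simp⟩ <;>
        simp [mem_trianglePath] <;> omega
    · refine one_lt_card.mpr ⟨⟨n - 3, by omega⟩, ?_, ⟨n - 1, by omega⟩, ?_, by simp; omega⟩
        <;> simp [mem_trianglePath] <;> omega
  · rw [h, Nat.mod_self]
    refine one_lt_card.mpr ⟨⟨0, by omega⟩, ?_, ⟨n - 1, by omega⟩, ?_, by simp; omega⟩ <;>
      simp [mem_trianglePath] <;> omega

lemma interiorNeighborsOnPath_trianglePath (hn : 6 ≤ n) :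
    InteriorNeighborsOnPath (threeCycleGraph (Irel n)) (trianglePath n) (n - 1) := by
  rintro i hi₀ hi t ⟨hne, -, ht, hcard⟩
  obtain ⟨j, rfl⟩ : ∃ j, i = j + 1 := ⟨i - 1, by omega⟩
  obtain ⟨u, hu, w, hw, huw⟩ := one_lt_card.mp hcard
  rw [trianglePath_succ (by omega)] at hne hu hw
  simp only [mem_inter, mem_intervalTriangle, Fin.ext_iff.not] at hu hw huw
  rcases (isThreeCycle_Irel_iff (by omega)).mp ht with ⟨j', hj', rfl⟩ | ⟨s, hs₂, hs, rfl⟩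
  · simp only [mem_intervalTriangle] at hu hw
    rcases (show j' + 1 = j ∨ j' = j ∨ j' = j + 1 by omega) with h | rfl | rfl
    · exact .inl (by rw [Nat.add_sub_cancel, ← h, trianglePath_succ (by omega)])
    · exact absurd rfl hne
    · exact .inr (trianglePath_succ (by omega)).symm
  · simp only [mem_endpointTriangle] at hu hw
    rcases (show j = 0 ∧ s = 2 ∨ j = n - 3 ∧ s = n - 3 by omega) with ⟨rfl, rfl⟩ | ⟨rfl, rfl⟩
    · exact .inl trianglePath_zero.symm
    · refine .inr ?_
      rw [show n - 3 + 1 + 1 = n - 1 by omega, trianglePath_sub_one (by omega)]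
      rfl

lemma isCyclicEmbedding_trianglePath (hn : 6 ≤ n) :
    IsCyclicEmbedding (threeCycleGraph (Irel n)) fun k : ZMod n => trianglePath n k.val := by
  have : NeZero n := ⟨by omega⟩
  refine ⟨fun k l h => ZMod.val_injective n ?_, fun k => ?_⟩
  · exact trianglePath_injOn hn (Nat.le_sub_one_of_lt (ZMod.val_lt k))
      (Nat.le_sub_one_of_lt (ZMod.val_lt l)) h
  · dsimp only
    rw [ZMod.val_add, ZMod.val_one'' (by omega)]
    exact threeCycleGraph_adj_trianglePath_mod hn (ZMod.val_lt k)

lemma exists_trianglePath_of_disjoint (hn : 4 ≤ n) {s t : Finset (Fin n)}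
    (hs : IsThreeCycle (Irel n) s) (ht : IsThreeCycle (Irel n) t) (hst : Disjoint s t) :
    ∃ i, 0 < i ∧ i < n - 1 ∧ (s = trianglePath n i ∨ t = trianglePath n i) := by
  rcases (isThreeCycle_Irel_iff hn).mp hs with ⟨j, hj, rfl⟩ | ⟨a, -, -, rfl⟩
  · exact ⟨j + 1, by omega, by omega, .inl (trianglePath_succ hj).symm⟩
  rcases (isThreeCycle_Irel_iff hn).mp ht with ⟨j, hj, rfl⟩ | ⟨b, -, -, rfl⟩
  · exact ⟨j + 1, by omega, by omega, .inr (trianglePath_succ hj).symm⟩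
  exact absurd hst (not_disjoint_iff.mpr ⟨⟨0, by omega⟩, by simp, by simp⟩)

end Tournament

/-- For distinct `m, n ≥ 6`, the tournament `I_m` does not embed into `I_n`
(embeddings of tournaments are injective maps preserving the edge relation);
hence `{I_n : n ≥ 6}` is an infinite antichain under embeddability. -/
theorem stmt13 (m n : ℕ) (hm : 6 ≤ m) (hn : 6 ≤ n) (hmn : m ≠ n) :
    ¬ ∃ f : Fin m → Fin n, Function.Injective f ∧
      ∀ x y, Irel m x y → Irel n (f x) (f y) := by
  rintro ⟨f, hf, hrel⟩
  have hlt : m < n := (by simpa using Fintype.card_le_of_injective f hf : m ≤ n).lt_of_ne hmn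
  let c : ZMod m → Finset (Fin n) := fun k => (trianglePath m k.val).map ⟨f, hf⟩
  have hc : IsCyclicEmbedding (threeCycleGraph (Irel n)) c :=
    (isCyclicEmbedding_trianglePath hm).map (threeCycleGraph.map ⟨f, hf⟩ hrel) (map_injective _)
  -- the images of `{0, 1, 2}` and `{3, 4, 5}`
  have hdisj : Disjoint (c (1 : ℕ)) (c (4 : ℕ)) := by
    simp only [c, disjoint_map, ZMod.val_natCast_of_lt (show 1 < m by omega),
      ZMod.val_natCast_of_lt (show 4 < m by omega)]
    exact disjoint_left.mpr fun x hx hx' => by simp [mem_trianglePath] at hx hx'; omega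
  obtain ⟨i, hi₀, hi, hk | hk⟩ :=
    exists_trianglePath_of_disjoint (by omega) (hc.2 _).2.1 (hc.2 _).2.1 hdisj <;>
  · have := hc.lt_of_apply_eq (by omega) (interiorNeighborsOnPath_trianglePath hn)
      (trianglePath_injOn hn) hi₀ hi hk
    omega
end
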